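/- Let R be a commutative ring and let ω ∈ R satisfy ω² + ω + 1 = 0 (so that ω³ = 1 and ω is a unit in R). Then in the ring of formal power series R[[q]] one has the identity ∏_{n≥1} (1−q^n)(1−q^{11n})³(1−ω²q^{11n})(1−ω⁻²q^{11n})(1−ω⁴q^{11n})(1−ω⁻⁴q^{11n})(1−ω⁸q^{11n})(1−ω⁻⁸q^{11n})(1−ω¹⁰q^{11n})(1−ω⁻¹⁰q^{11n}) · ((1−ωq^n)(1−ω⁻¹q^n))⁻¹ = ∏_{n≥1} (1−q^n)²(1−q^{33n})⁴ · ((1−q^{3n})(1−q^{11n}))⁻¹. -/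

import Mathlib

open PowerSeries LaurentPolynomial Finset

/-- The factor `1 - c·q^m` of an infinite product, as a formal power series. -/
noncomputable def factor {R : Type*} [CommRing R] (c : R) (m : ℕ) : PowerSeries R :=
  1 - PowerSeries.C c * PowerSeries.X ^ m

/-- The infinite product `∏_{n ≥ 1} f n` in `R[[q]]`, for a sequence of factors in which the
`n`-th factor is congruent to `1` modulo `q^n`: it is defined coefficientwise, the coefficient
of `q^m` being the (stabilized) coefficient of `q^m` in the partial product of the factors with
index `1, …, m+1`, which agrees with the limit of the partial products in the `q`-adic topology. -/
noncomputable def infiniteProd {R : Type*} [CommRing R] (f : ℕ → PowerSeries R) : PowerSeries R :=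
  PowerSeries.mk fun m => PowerSeries.coeff m (∏ n ∈ Finset.range (m + 1), f (n + 1))

/-!
The root of unity `ω` turns the products into a factorwise identity: since
`(1 - ω x)(1 - ω² x)(1 - x) = 1 - x³`, the factors with `ω` and `ω⁻¹ = ω²` at `q^{11n}` combine
with three of the four factors `1 - q^{11n}` into `(1 - q^{33n})⁴ / (1 - q^{11n})`, and the
denominator `(1 - ω q^n)(1 - ω² q^n)` equals `(1 - q^{3n}) / (1 - q^n)`. After clearing the
(invertible) denominators, both sides of the `n`-th factor agree.
-/

theorem infiniteProd_congr {R : Type*} [CommRing R] {f g : ℕ → PowerSeries R}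
    (h : ∀ n, 0 < n → f n = g n) : infiniteProd f = infiniteProd g := by
  ext m
  simp only [infiniteProd, coeff_mk]
  rw [prod_congr rfl fun n _ => h (n + 1) n.succ_pos]

theorem isUnit_factor {R : Type*} [CommRing R] (c : R) {m : ℕ} (hm : 0 < m) :
    IsUnit (factor c m) := by
  simp [isUnit_iff_constantCoeff, factor, zero_pow hm.ne']

theorem Ring.mul_inverse_eq_mul_inverse {M₀ : Type*} [CommMonoidWithZero M₀] {a b u v : M₀}
    (hu : IsUnit u) (hv : IsUnit v) (h : a * v = b * u) :
    a * Ring.inverse u = b * Ring.inverse v := by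
  rw [Ring.eq_mul_inverse_iff_mul_eq _ _ _ hv, mul_right_comm, h,
    Ring.mul_inverse_cancel_right _ _ hu]

section CubeRootOfUnity

variable {R : Type*} [CommRing R] {ω : R}

theorem pow_three_eq_one_of_sq_add_add_one (hω : ω ^ 2 + ω + 1 = 0) : ω ^ 3 = 1 := by
  linear_combination (ω - 1) * hω

theorem Ring.inverse_eq_sq_of_sq_add_add_one (hω : ω ^ 2 + ω + 1 = 0) :
    Ring.inverse ω = ω ^ 2 := by
  have h3 := pow_three_eq_one_of_sq_add_add_one hω
  have hω1 : ω * ω ^ 2 = 1 := by rw [← pow_succ', h3]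
  have := Ring.inverse_mul_cancel_left ω (ω ^ 2) (.of_mul_eq_one _ hω1)
  rwa [hω1, mul_one] at this

theorem one_sub_mul_mul_one_sub_sq_mul_mul_one_sub (hω : ω ^ 2 + ω + 1 = 0) (x : R) :
    (1 - ω * x) * (1 - ω ^ 2 * x) * (1 - x) = 1 - x ^ 3 := by
  linear_combination x * (1 - x) * ((ω - 1) * x - 1) * hω

theorem factor_mul_factor_sq_mul_factor_one (hω : ω ^ 2 + ω + 1 = 0) (m : ℕ) :
    factor ω m * factor (ω ^ 2) m * factor 1 m = factor 1 (3 * m) := by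
  have hCω : PowerSeries.C ω ^ 2 + PowerSeries.C ω + 1 = 0 := by
    simpa using congrArg PowerSeries.C hω
  simpa [factor, mul_comm 3 m, pow_mul] using
    one_sub_mul_mul_one_sub_sq_mul_mul_one_sub hCω (X ^ m)

end CubeRootOfUnity

theorem crank11_product_identity {R : Type*} [CommRing R] (ω : R)
    (hω : ω ^ 2 + ω + 1 = 0) :
    (infiniteProd fun n =>
      factor 1 n *
      factor 1 (11 * n) ^ 3 *
      factor (ω ^ 2) (11 * n) *
      factor (Ring.inverse ω ^ 2) (11 * n) *
      factor (ω ^ 4) (11 * n) *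
      factor (Ring.inverse ω ^ 4) (11 * n) *
      factor (ω ^ 8) (11 * n) *
      factor (Ring.inverse ω ^ 8) (11 * n) *
      factor (ω ^ 10) (11 * n) *
      factor (Ring.inverse ω ^ 10) (11 * n) *
      Ring.inverse (factor (ω) n * factor (Ring.inverse ω) n)) =
    infiniteProd fun n =>
      factor (1 : R) n ^ 2 * factor (1 : R) (33 * n) ^ 4 *
      Ring.inverse (factor (1 : R) (3 * n) * factor (1 : R) (11 * n)) := by
  have h3 := pow_three_eq_one_of_sq_add_add_one hω
  refine infiniteProd_congr fun n hn => ?_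
  simp only [Ring.inverse_eq_sq_of_sq_add_add_one hω, ← pow_mul, Nat.reduceMul]
  rw [pow_eq_pow_mod 4 h3, pow_eq_pow_mod 8 h3, pow_eq_pow_mod 10 h3, pow_eq_pow_mod 16 h3,
    pow_eq_pow_mod 20 h3]
  norm_num only [pow_one]
  refine Ring.mul_inverse_eq_mul_inverse ((isUnit_factor _ hn).mul (isUnit_factor _ hn))
    ((isUnit_factor _ (by omega)).mul (isUnit_factor _ (by omega))) ?_
  have h33n := factor_mul_factor_sq_mul_factor_one hω (11 * n)
  rw [← mul_assoc, show 3 * 11 = 33 by rfl] at h33n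
  rw [← h33n, ← factor_mul_factor_sq_mul_factor_one hω n]
  ring
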